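/- Let D be a degree-zero 1-cocycle of the Witt algebra with coefficients in 𝓕_α ⊗ 𝓕_β (so D(L_m) ∈ (𝓕_α ⊗ 𝓕_β)_m for all m). Then D(L_0) = a·δ_{α,0}·δ_{β,0} v_0 ⊗ w_0 for some a ∈ ℂ; in particular if (α,β) ≠ (0,0) then D(L_0) = 0. -/

import Mathlib

/-!
Taking `n = 0` in the cocycle identity and using that `L_0` acts on the degree-`m` part by `-m`
shows that `u = D(L_0)` is annihilated by every `L_m`. Reading `L_m · u = 0` at `v_x ⊗ w_{m-x}`
gives `(x - m + αm) u_{x-m} = (x - βm) u_x` for the coefficients `u_i` of `v_i ⊗ w_{-i}`.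
For `x ≠ 0`, a large `m` makes the left side vanish (finite support) and `x - βm ≠ 0`, so `u_x = 0`;
the cases `m = 1`, `x ∈ {0, 1}` then give `α u_0 = β u_0 = 0`.
-/

/-- The action of the Witt basis element `L m` on `𝓕_α ⊗ 𝓕_β`, realized on
`(ℤ × ℤ) →₀ ℂ` with basis `v_i ⊗ w_j ↦ single (i, j) 1`:
`L_m · (v_i ⊗ w_j) = -(i + αm) v_{m+i} ⊗ w_j - (j + βm) v_i ⊗ w_{m+j}`. -/
noncomputable def tact (α β : ℂ) (m : ℤ) : ((ℤ × ℤ) →₀ ℂ) →ₗ[ℂ] ((ℤ × ℤ) →₀ ℂ) :=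
  Finsupp.lsum ℂ fun p => LinearMap.toSpanSingleton ℂ ((ℤ × ℤ) →₀ ℂ)
    ((-((p.1 : ℂ) + α * m)) • Finsupp.single (m + p.1, p.2) (1 : ℂ)
      + (-((p.2 : ℂ) + β * m)) • Finsupp.single (p.1, m + p.2) (1 : ℂ))

/-- A family `d n = d(L_n)` is a 1-cocycle of the Witt algebra with
coefficients in `𝓕_α ⊗ 𝓕_β`: `d([L_m, L_n]) = L_m · d(L_n) - L_n · d(L_m)`. -/
def IsCocycle (α β : ℂ) (d : ℤ → ((ℤ × ℤ) →₀ ℂ)) : Prop :=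
  ∀ m n : ℤ, ((m - n : ℤ) : ℂ) • d (m + n) = tact α β m (d n) - tact α β n (d m)

/-- `d` is a 1-coboundary: `d(L_n) = L_n · u` for a fixed `u` in the module. -/
def IsCoboundary (α β : ℂ) (d : ℤ → ((ℤ × ℤ) →₀ ℂ)) : Prop :=
  ∃ u : (ℤ × ℤ) →₀ ℂ, ∀ n : ℤ, d n = tact α β n u

lemma tact_apply (α β : ℂ) (m : ℤ) (f : (ℤ × ℤ) →₀ ℂ) (q : ℤ × ℤ) :
    tact α β m f q = (-((q.1 - m : ℤ) + α * m)) * f (q.1 - m, q.2)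
      + (-((q.2 - m : ℤ) + β * m)) * f (q.1, q.2 - m) := by
  rw [tact, Finsupp.lsum_apply, Finsupp.sum_apply, Finsupp.sum]
  simp only [LinearMap.toSpanSingleton_apply, smul_add, Finsupp.smul_single,
    Finsupp.coe_add, Pi.add_apply, Finsupp.single_apply, smul_eq_mul, mul_one]
  rw [Finset.sum_add_distrib]
  have h1 : ∀ p : ℤ × ℤ, ((m + p.1, p.2) = q) = (p = (q.1 - m, q.2)) := by
    intro p; ext; simp [Prod.ext_iff]; omega
  have h2 : ∀ p : ℤ × ℤ, ((p.1, m + p.2) = q) = (p = (q.1, q.2 - m)) := by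
    intro p; ext; simp [Prod.ext_iff]; omega
  simp only [h1, h2, Finset.sum_ite_eq' f.support]
  by_cases hA : (q.1 - m, q.2) ∈ f.support <;> by_cases hB : (q.1, q.2 - m) ∈ f.support <;>
    simp_all <;> ring

lemma tact_zero_apply (α β : ℂ) (f : (ℤ × ℤ) →₀ ℂ) (x y : ℤ) :
    tact α β 0 f (x, y) = -((x : ℂ) + y) * f (x, y) := by
  rw [tact_apply]
  simp only [sub_zero, Int.cast_zero, mul_zero, add_zero]
  ring

/-- Elements of `(𝓕_α ⊗ 𝓕_β)_k`. -/
def IsHomogeneous (k : ℤ) (f : (ℤ × ℤ) →₀ ℂ) : Prop :=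
  ∀ p ∈ f.support, p.1 + p.2 = k

lemma IsHomogeneous.apply_eq_zero {k : ℤ} {f : (ℤ × ℤ) →₀ ℂ} (hf : IsHomogeneous k f)
    {x y : ℤ} (hxy : x + y ≠ k) : f (x, y) = 0 :=
  Finsupp.notMem_support_iff.mp fun h => hxy (hf _ h)

lemma tact_zero_of_isHomogeneous (α β : ℂ) {k : ℤ} {f : (ℤ × ℤ) →₀ ℂ}
    (hf : IsHomogeneous k f) : tact α β 0 f = -(k : ℂ) • f := by
  ext ⟨x, y⟩
  rw [tact_zero_apply, Finsupp.smul_apply, smul_eq_mul]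
  by_cases hxy : x + y = k
  · rw [← hxy]; push_cast; ring
  · simp [hf.apply_eq_zero hxy]

def IsWittInvariant (α β : ℂ) (u : (ℤ × ℤ) →₀ ℂ) : Prop :=
  ∀ m, tact α β m u = 0

lemma IsCocycle.isWittInvariant_zero {α β : ℂ} {D : ℤ → ((ℤ × ℤ) →₀ ℂ)}
    (hD : IsCocycle α β D) (hdeg : ∀ m, IsHomogeneous m (D m)) : IsWittInvariant α β (D 0) := by
  intro m
  have h := hD m 0
  rw [add_zero, sub_zero, tact_zero_of_isHomogeneous α β (hdeg m)] at h
  simpa using h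

namespace IsWittInvariant

variable {α β : ℂ} {u : (ℤ × ℤ) →₀ ℂ} (hu : IsWittInvariant α β u)
include hu

lemma apply_eq_zero_of_add_ne_zero {x y : ℤ} (hxy : x + y ≠ 0) : u (x, y) = 0 := by
  have h := tact_zero_apply α β u x y
  rw [hu 0, Finsupp.coe_zero, Pi.zero_apply, eq_comm, mul_eq_zero, neg_eq_zero] at h
  exact h.resolve_left (by exact_mod_cast hxy)

lemma antidiagonal_recurrence (m x : ℤ) :
    ((x - m : ℤ) + α * m) * u (x - m, m - x) = (x - β * m) * u (x, -x) := by
  have h := tact_apply α β m u (x, m - x)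
  rw [hu m] at h
  simp only [Finsupp.coe_zero, Pi.zero_apply, sub_sub_cancel_left] at h
  push_cast at h ⊢
  linear_combination h

lemma apply_antidiagonal_eq_zero {x : ℤ} (hx : x ≠ 0) : u (x, -x) = 0 := by
  have hinj : Function.Injective fun m : ℤ => (x - m, m - x) := fun a b h => by
    simp only [Prod.mk.injEq] at h; omega
  have hvanish : ∀ᶠ m in Filter.cofinite, u (x - m, m - x) = 0 :=
    hinj.tendsto_cofinite.eventually u.support.finite_toSet.eventually_cofinite_notMem
      |>.mono fun _ hm => Finsupp.notMem_support_iff.mp hm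
  -- `x = β m` has at most one solution `m`, as `β = 0` would force `x = 0`.
  have hroot : ({m : ℤ | (x : ℂ) = β * m} : Set ℤ).Subsingleton := by
    intro a ha b hb
    have hβ : β ≠ 0 := by rintro rfl; simp_all
    exact_mod_cast mul_left_cancel₀ hβ (ha.symm.trans hb)
  obtain ⟨m, hm, hmβ⟩ := (hvanish.and hroot.finite.eventually_cofinite_notMem).exists
  have h := antidiagonal_recurrence hu m x
  rw [hm, mul_zero, eq_comm, mul_eq_zero, sub_eq_zero] at h
  exact h.resolve_left hmβ

lemma apply_zero_eq_zero (hαβ : α ≠ 0 ∨ β ≠ 0) : u (0, 0) = 0 := by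
  have h₁ := antidiagonal_recurrence hu 1 1
  have h₀ := antidiagonal_recurrence hu 1 0
  have hv₁ : u (1, -1) = 0 := apply_antidiagonal_eq_zero hu one_ne_zero
  have hvneg₁ : u (-1, 1) = 0 := by simpa using apply_antidiagonal_eq_zero hu (x := -1) (by norm_num)
  norm_num [hv₁, hvneg₁] at h₁ h₀
  tauto

lemma eq_smul_single_zero : u = u (0, 0) • Finsupp.single (0, 0) 1 := by
  ext ⟨x, y⟩
  rw [Finsupp.smul_apply, Finsupp.single_apply, smul_eq_mul]
  by_cases hxy : x + y = 0
  · obtain rfl : y = -x := by omega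
    by_cases hx : x = 0
    · simp [hx]
    · rw [apply_antidiagonal_eq_zero hu hx, if_neg (by simp [hx]), mul_zero]
  · rw [apply_eq_zero_of_add_ne_zero hu hxy, if_neg (by simp [Prod.ext_iff]; omega), mul_zero]

end IsWittInvariant

/-- a degree-zero 1-cocycle `D` of the Witt algebra with
coefficients in `𝓕_α ⊗ 𝓕_β` satisfies
`D(L_0) = a · δ_{α,0} · δ_{β,0} v_0 ⊗ w_0` for some `a ∈ ℂ`. -/
theorem degree_zero_cocycle_value_at_L0 (α β : ℂ)
    (D : ℤ → ((ℤ × ℤ) →₀ ℂ)) (hD : IsCocycle α β D)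
    (hdeg : ∀ m : ℤ, ∀ p ∈ (D m).support, p.1 + p.2 = m) :
    ∃ a : ℂ,
      D 0 = (a * (if α = 0 then 1 else 0) * (if β = 0 then 1 else 0)) •
        Finsupp.single ((0 : ℤ), (0 : ℤ)) (1 : ℂ) := by
  have hinv := hD.isWittInvariant_zero hdeg
  refine ⟨D 0 (0, 0), ?_⟩
  by_cases hαβ : α = 0 ∧ β = 0
  · simpa [hαβ] using hinv.eq_smul_single_zero
  · rw [hinv.eq_smul_single_zero, hinv.apply_zero_eq_zero (by tauto)]
    simp
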